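/- arXiv:2412.05751 — 2 statements merged into one kernel-verified Lean document; each statement's English description precedes it below -/
import Mathlib

section
/- Let χ ≥ 0 and r* > 0 be such that for all r ≥ r*, F(r) ≥ exp((2χ+1) r) + 2χ r + 1, where F : ℝ → ℝ. Then for all σ ≥ 1 and φ ≥ r*, one has (1/2) F(φ) + (1/2) σ (log σ - 1) - χ σ φ ≥ 0. -/
/-- Young-type inequality: `a * b ≤ exp a + b * log b - b` for `b > 0`. -/
lemma young_exp_log (a b : ℝ) (hb : 0 < b) :
    a * b ≤ Real.exp a + b * Real.log b - b := by
  have h := Real.add_one_le_exp (a - Real.log b)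
  have h2 : (a - Real.log b + 1) * b ≤ Real.exp (a - Real.log b) * b :=
    mul_le_mul_of_nonneg_right h hb.le
  rw [Real.exp_sub, Real.exp_log hb] at h2
  have h3 : Real.exp a / b * b = Real.exp a := div_mul_cancel₀ _ hb.ne'
  nlinarith [h2, h3]

/-- Coercivity estimate: if `F r ≥ exp((2χ+1) r) + 2χ r + 1` for `r ≥ r*`, then for
all `σ ≥ 1` and `φ ≥ r*`, `(1/2) F(φ) + (1/2) σ (log σ - 1) - χ σ φ ≥ 0`. -/
theorem coercivity_estimate (χ rstar : ℝ) (hχ : 0 ≤ χ) (hrstar : 0 < rstar)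
    (F : ℝ → ℝ)
    (hF : ∀ r : ℝ, rstar ≤ r → Real.exp ((2 * χ + 1) * r) + 2 * χ * r + 1 ≤ F r) :
    ∀ σ φ : ℝ, 1 ≤ σ → rstar ≤ φ →
      0 ≤ (1 / 2) * F φ + (1 / 2) * σ * (Real.log σ - 1) - χ * σ * φ := by
  intro σ φ hσ hφ
  have hφ0 : 0 < φ := lt_of_lt_of_le hrstar hφ
  have hσ0 : 0 < σ := lt_of_lt_of_le one_pos hσ
  have hy := young_exp_log (2 * χ * φ) σ hσ0
  have hFφ := hF φ hφ
  have hexp : Real.exp (2 * χ * φ) ≤ Real.exp ((2 * χ + 1) * φ) :=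
    Real.exp_le_exp.mpr (by nlinarith)
  have hχφ : 0 ≤ 2 * χ * φ := by positivity
  nlinarith [hy, hFφ, hexp, hχφ]
end

section
/- Let χ ≥ 0 and r̃* > 0 be such that for all r ≥ r̃*, F(r) ≥ exp((4χ+1) r) + 4χ r, where F : ℝ → ℝ. Then for all σ ≥ 1 and φ ≥ r̃*, one has (1/4) F(φ) + (1/2) σ² log σ - χ σ² φ ≥ 0. -/
/-- Coercivity estimate for the logistic term: if `F r ≥ exp((4χ+1) r) + 4χ r` for
`r ≥ r̃*`, then for all `σ ≥ 1` and `φ ≥ r̃*`,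
`(1/4) F(φ) + (1/2) σ² log σ - χ σ² φ ≥ 0`. -/
theorem coercivity_estimate_logistic (χ rstar : ℝ) (hχ : 0 ≤ χ) (hrstar : 0 < rstar)
    (F : ℝ → ℝ)
    (hF : ∀ r : ℝ, rstar ≤ r → Real.exp ((4 * χ + 1) * r) + 4 * χ * r ≤ F r) :
    ∀ σ φ : ℝ, 1 ≤ σ → rstar ≤ φ →
      0 ≤ (1 / 4) * F φ + (1 / 2) * σ ^ 2 * Real.log σ - χ * σ ^ 2 * φ := by
  intro σ φ hσ hφ
  have hφ0 : 0 < φ := lt_of_lt_of_le hrstar hφ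
  set a : ℝ := 4 * χ * φ with ha
  set b : ℝ := σ ^ 2 with hb
  have hb1 : (1 : ℝ) ≤ b := by nlinarith
  have hb0 : 0 < b := lt_of_lt_of_le one_pos hb1
  -- Young: a * b ≤ exp a + b * log b - b
  have hyoung : a * b ≤ Real.exp a + b * Real.log b - b := by
    have h1 : (a - Real.log b) + 1 ≤ Real.exp (a - Real.log b) :=
      Real.add_one_le_exp _
    have h2 : Real.exp (a - Real.log b) = Real.exp a / b := by
      rw [Real.exp_sub, Real.exp_log hb0]
    rw [h2] at h1
    have h3 : b * ((a - Real.log b) + 1) ≤ Real.exp a := by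
      rw [mul_comm]
      calc ((a - Real.log b) + 1) * b ≤ (Real.exp a / b) * b :=
            mul_le_mul_of_nonneg_right h1 hb0.le
        _ = Real.exp a := by field_simp
    nlinarith [h3]
  have hexp : Real.exp a ≤ Real.exp ((4 * χ + 1) * φ) := by
    apply Real.exp_le_exp.2
    nlinarith
  have hFφ := hF φ hφ
  have hlog : b * Real.log b = 2 * (σ ^ 2 * Real.log σ) := by
    rw [hb, Real.log_pow]
    push_cast
    ring
  have hχφ : 0 ≤ 4 * χ * φ := by positivity
  have hab : χ * b * φ = a * b / 4 := by rw [ha]; ring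
  have hbl : (1 / 2 : ℝ) * b * Real.log σ = b * Real.log b / 4 := by
    rw [hlog, hb]; ring
  linarith [hyoung, hexp, hFφ, hbl, hab, hχφ, hb0]
end
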